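/- Let n ≥ 1 and consider 2n points 0, 1, …, 2n−1 in circular order on a circle. Let A and B be two noncrossing perfect matchings of these points with A ≠ B. Then there exist points p₁ and p₂ such that the B-partner of p₁ is strictly greater than the A-partner of p₁ in the linear order on the remaining points obtained by traversing the circle starting just after p₁, and the B-partner of p₂ is strictly less than the A-partner of p₂ in the corresponding linear order based at p₂. -/
import Mathlib


/-- Cyclic distance from `p` to `q` on `m` points. -/
def cdist (m : ℕ) (p q : Fin m) : ℕ := (q.val + m - p.val) % m

/-- `x` lies strictly between `a` and `b` in circular order. -/
def CircBtw (m : ℕ) (a b x : Fin m) : Prop :=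
  0 < cdist m a x ∧ cdist m a x < cdist m a b

/-- A matching (involution) `σ` is noncrossing if no two of its chords
interleave on the circle. -/
def Noncrossing {m : ℕ} (σ : Equiv.Perm (Fin m)) : Prop :=
  ∀ a c : Fin m, ¬ Xor' (CircBtw m a (σ a) c) (CircBtw m a (σ a) (σ c))

lemma cdist_explicit (m : ℕ) (p q : Fin m) :
    cdist m p q = if p.val ≤ q.val then q.val - p.val else q.val + m - p.val := by
  have hp := p.isLt
  have hq := q.isLt
  unfold cdist
  rcases le_or_gt p.val q.val with h | h
  · rw [if_pos h]
    have : q.val + m - p.val = (q.val - p.val) + m := by omega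
    rw [this, Nat.add_mod_right, Nat.mod_eq_of_lt (by omega)]
  · rw [if_neg (by omega)]
    exact Nat.mod_eq_of_lt (by omega)

lemma cdist_inj (m : ℕ) (p q q' : Fin m) (h : cdist m p q = cdist m p q') : q = q' := by
  have hp := p.isLt
  have hq := q.isLt
  have hq' := q'.isLt
  rw [cdist_explicit, cdist_explicit] at h
  apply Fin.ext
  split_ifs at h <;> omega

lemma cdist_add (m : ℕ) (p q : Fin m) (h : p ≠ q) :
    cdist m p q + cdist m q p = m := by
  have hp := p.isLt
  have hq := q.isLt
  have hne : p.val ≠ q.val := fun hh => h (Fin.ext hh)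
  rw [cdist_explicit, cdist_explicit]
  split_ifs <;> omega

lemma sum_cdist (n : ℕ) (σ : Equiv.Perm (Fin (2 * n)))
    (hinv : Function.Involutive σ) (hfpf : ∀ p, σ p ≠ p) :
    2 * ∑ p : Fin (2 * n), cdist (2 * n) p (σ p) = 2 * n * (2 * n) := by
  have h1 : ∑ p : Fin (2 * n), cdist (2 * n) p (σ p)
      = ∑ p : Fin (2 * n), cdist (2 * n) (σ p) p := by
    rw [← Equiv.sum_comp σ (fun p => cdist (2 * n) (σ p) p)]
    simp only [hinv _]
  have h2 : ∑ p : Fin (2 * n), (cdist (2 * n) p (σ p) + cdist (2 * n) (σ p) p)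
      = ∑ _p : Fin (2 * n), 2 * n := by
    apply Finset.sum_congr rfl
    intro p _
    exact cdist_add _ _ _ (fun hh => hfpf p hh.symm)
  rw [Finset.sum_add_distrib] at h2
  simp only [Finset.sum_const, Finset.card_univ, Fintype.card_fin, smul_eq_mul] at h2
  omega

/-- chord lemma: two distinct noncrossing perfect matchings of
`2n` points on a circle must veer right at some point and left at another:
there are `p₁` with `B`-partner strictly to the right of the `A`-partner (in
the order based at `p₁`) and `p₂` with `B`-partner strictly to the left. -/
theorem distinct_noncrossing_matchings_veer_both_ways
    (n : ℕ) (hn : 1 ≤ n)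
    (A B : Equiv.Perm (Fin (2 * n)))
    (hAinv : Function.Involutive A) (hAfpf : ∀ p, A p ≠ p)
    (hBinv : Function.Involutive B) (hBfpf : ∀ p, B p ≠ p)
    (hAnc : Noncrossing A) (hBnc : Noncrossing B)
    (hne : A ≠ B) :
    (∃ p₁ : Fin (2 * n), cdist (2 * n) p₁ (A p₁) < cdist (2 * n) p₁ (B p₁)) ∧
    (∃ p₂ : Fin (2 * n), cdist (2 * n) p₂ (B p₂) < cdist (2 * n) p₂ (A p₂)) := by
  obtain ⟨p₀, hp₀⟩ : ∃ p, A p ≠ B p := by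
    by_contra h
    push_neg at h
    exact hne (Equiv.ext h)
  have hsum : ∑ p : Fin (2 * n), cdist (2 * n) p (A p)
      = ∑ p : Fin (2 * n), cdist (2 * n) p (B p) := by
    have := sum_cdist n A hAinv hAfpf
    have := sum_cdist n B hBinv hBfpf
    omega
  have hdne : cdist (2 * n) p₀ (A p₀) ≠ cdist (2 * n) p₀ (B p₀) :=
    fun h => hp₀ (cdist_inj _ _ _ _ h)
  constructor
  · by_contra h
    push_neg at h
    have hlt : ∑ p : Fin (2 * n), cdist (2 * n) p (B p)
        < ∑ p : Fin (2 * n), cdist (2 * n) p (A p) := by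
      apply Finset.sum_lt_sum (fun p _ => h p)
      exact ⟨p₀, Finset.mem_univ _, lt_of_le_of_ne (h p₀) (Ne.symm hdne)⟩
    omega
  · by_contra h
    push_neg at h
    have hlt : ∑ p : Fin (2 * n), cdist (2 * n) p (A p)
        < ∑ p : Fin (2 * n), cdist (2 * n) p (B p) := by
      apply Finset.sum_lt_sum (fun p _ => h p)
      exact ⟨p₀, Finset.mem_univ _, lt_of_le_of_ne (h p₀) hdne⟩
    omega
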